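/- Characterization of the stabilizer of l∧m (used in Sections 3 and 4; Besse, Section 10.122): a proper orthochronous Lorentz transformation Λ satisfies (Λl)∧(Λm) = l∧m (equality of 2-forms, i.e. Λ(l mᵀ − m lᵀ)Λᵀ = l mᵀ − m lᵀ) if and only if Λ = B(f) for some f ∈ ℂ. -/
import Mathlib


noncomputable section

open scoped Matrix

/-- η := diag(1,−1,−1,−1). -/
def ηM : Matrix (Fin 4) (Fin 4) ℝ :=
  !![1, 0, 0, 0; 0, -1, 0, 0; 0, 0, -1, 0; 0, 0, 0, -1]

/-- Λ is a proper orthochronous Lorentz transformation. -/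
def IsLorentz (Λ : Matrix (Fin 4) (Fin 4) ℝ) : Prop :=
  Λᵀ * ηM * Λ = ηM ∧ Λ.det = 1 ∧ 0 < Λ 0 0

/-- Complexification of a real matrix. -/
def toC (Λ : Matrix (Fin 4) (Fin 4) ℝ) : Matrix (Fin 4) (Fin 4) ℂ :=
  Λ.map (fun t => (t : ℂ))

/-- l := e₀ + e₃. -/
def lV : Fin 4 → ℂ := ![1, 0, 0, 1]

/-- m := e₁ + ie₂. -/
def mV : Fin 4 → ℂ := ![0, 1, Complex.I, 0]

/-- m̄ := e₁ − ie₂. -/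
def mbV : Fin 4 → ℂ := ![0, 1, -Complex.I, 0]

/-- n := e₀ − e₃. -/
def nV : Fin 4 → ℂ := ![1, 0, 0, -1]

/-- The 2-form l∧m, identified with the antisymmetric matrix l mᵀ − m lᵀ. -/
def lmWedge : Matrix (Fin 4) (Fin 4) ℂ :=
  Matrix.vecMulVec lV mV - Matrix.vecMulVec mV lV

/-- The real 4×4 matrix B(f): B(f)l = l, B(f)m = m + f l, B(f)m̄ = m̄ + f̄ l,
B(f)n = n + f m̄ + f̄ m + |f|² l. -/
def Bmat (f : ℂ) : Matrix (Fin 4) (Fin 4) ℝ :=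
  !![1 + Complex.normSq f / 2, f.re, f.im, -(Complex.normSq f / 2);
     f.re, 1, 0, -f.re;
     f.im, 0, 1, -f.im;
     Complex.normSq f / 2, f.re, f.im, 1 - Complex.normSq f / 2]

/-- The rotation R(φ) by angle φ in the e₁,e₂-plane: R(φ)l = l, R(φ)n = n,
R(φ)m = e^{iφ} m. -/
def Rmat (φ : ℝ) : Matrix (Fin 4) (Fin 4) ℝ :=
  !![1, 0, 0, 0;
     0, Real.cos φ, Real.sin φ, 0;
     0, -Real.sin φ, Real.cos φ, 0;
     0, 0, 0, 1]

set_option maxHeartbeats 1600000 in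
/-- Characterization of the stabilizer of l∧m: a proper orthochronous Lorentz
transformation Λ satisfies (Λl)∧(Λm) = l∧m if and only if Λ = B(f) for some f ∈ ℂ. -/
theorem stabilizer_of_lm_eq_B2 (Λ : Matrix (Fin 4) (Fin 4) ℝ) (hΛ : IsLorentz Λ) :
    toC Λ * lmWedge * (toC Λ)ᵀ = lmWedge ↔ ∃ f : ℂ, Λ = Bmat f := by
  constructor
  · intro hW
    obtain ⟨hη, -, hpos⟩ := hΛ
    -- row form of the Lorentz condition
    have hηη : ηM * ηM = 1 := by
      ext i j
      fin_cases i <;> fin_cases j <;>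
        simp [ηM, Matrix.mul_apply, Fin.sum_univ_four, Matrix.one_apply, Matrix.vecHead, Matrix.vecTail]
    have h1 : (ηM * Λᵀ * ηM) * Λ = 1 := by
      have := congrArg (fun M => ηM * M) hη
      simpa [Matrix.mul_assoc, hηη] using this
    have h2 : Λ * (ηM * Λᵀ * ηM) = 1 := mul_eq_one_comm.mp h1
    have hrow : Λ * ηM * Λᵀ = ηM := by
      have h3 : Λ * (ηM * Λᵀ * ηM) * ηM = ηM := by rw [h2, Matrix.one_mul]
      calc Λ * ηM * Λᵀ = Λ * (ηM * Λᵀ * ηM) * ηM := by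
            simp only [Matrix.mul_assoc, hηη, Matrix.mul_one]
        _ = ηM := h3
    -- scalar equations from the wedge condition
    have h01 := congrFun (congrFun hW 0) 1
    have h02 := congrFun (congrFun hW 0) 2
    have h03 := congrFun (congrFun hW 0) 3
    have h12 := congrFun (congrFun hW 1) 2
    have h13 := congrFun (congrFun hW 1) 3
    have h23 := congrFun (congrFun hW 2) 3
    simp [toC, lmWedge, lV, mV, Matrix.mul_apply, Fin.sum_univ_four,
      Matrix.vecMulVec_apply, Complex.ext_iff] at h01 h02 h03 h12 h13 h23
    obtain ⟨hp01, hq01⟩ := h01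
    obtain ⟨hp02, hq02⟩ := h02
    obtain ⟨hp03, hq03⟩ := h03
    obtain ⟨hp12, hq12⟩ := h12
    obtain ⟨hp13, hq13⟩ := h13
    obtain ⟨hp23, hq23⟩ := h23
    -- scalar equations from the Lorentz condition (columns)
    have C00 := congrFun (congrFun hη 0) 0
    have C01 := congrFun (congrFun hη 0) 1
    have C02 := congrFun (congrFun hη 0) 2
    have C03 := congrFun (congrFun hη 0) 3
    have C11 := congrFun (congrFun hη 1) 1
    have C13 := congrFun (congrFun hη 1) 3
    have C23 := congrFun (congrFun hη 2) 3
    have C33 := congrFun (congrFun hη 3) 3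
    have R00 := congrFun (congrFun hrow 0) 0
    simp [ηM, Matrix.mul_apply, Matrix.transpose_apply, Fin.sum_univ_four]
      at C00 C01 C02 C03 C11 C13 C23 C33 R00
    -- step 1: (Λl)₁ = (Λl)₂ = 0 combined components
    have hu2 : Λ 2 0 + Λ 2 3 = 0 := by
      linear_combination (-(Λ 2 0 + Λ 2 3))*hp01 + (Λ 1 0 + Λ 1 3)*hp02 + (-(Λ 0 0 + Λ 0 3))*hp12
    have hu1 : Λ 1 0 + Λ 1 3 = 0 := by
      linear_combination (Λ 2 0 + Λ 2 3)*hq01 - (Λ 1 0 + Λ 1 3)*hq02 + (Λ 0 0 + Λ 0 3)*hq12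
    have hA : (Λ 0 0 + Λ 0 3) * Λ 1 1 = 1 := by linear_combination hp01 + Λ 0 1*hu1
    have hu0ne : Λ 0 0 + Λ 0 3 ≠ 0 := by
      intro h; rw [h, zero_mul] at hA; exact zero_ne_one hA
    have hq1 : Λ 1 2 = 0 := by
      have h : (Λ 0 0 + Λ 0 3) * Λ 1 2 = 0 := by linear_combination hq01 + Λ 0 2*hu1
      exact (mul_eq_zero.mp h).resolve_left hu0ne
    have hp2 : Λ 2 1 = 0 := by
      have h : (Λ 0 0 + Λ 0 3) * Λ 2 1 = 0 := by linear_combination hp02 + Λ 0 1*hu2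
      exact (mul_eq_zero.mp h).resolve_left hu0ne
    have hq2A : (Λ 0 0 + Λ 0 3) * Λ 2 2 = 1 := by linear_combination hq02 + Λ 0 2*hu2
    have hB : Λ 1 1 * (Λ 3 0 + Λ 3 3) = 1 := by linear_combination -hp13 + Λ 3 1*hu1
    have hp1ne : Λ 1 1 ≠ 0 := by
      intro h; rw [h, mul_zero] at hA; exact zero_ne_one hA
    have hu3 : Λ 3 0 + Λ 3 3 = Λ 0 0 + Λ 0 3 := by
      have h : Λ 1 1 * ((Λ 3 0 + Λ 3 3) - (Λ 0 0 + Λ 0 3)) = 0 := by linear_combination hB - hA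
      have h2 := (mul_eq_zero.mp h).resolve_left hp1ne
      linarith [h2]
    have hp3 : Λ 3 1 = Λ 0 1 := by
      have h : (Λ 0 0 + Λ 0 3) * (Λ 3 1 - Λ 0 1) = 0 := by linear_combination hp03 + Λ 0 1*hu3
      have h2 := (mul_eq_zero.mp h).resolve_left hu0ne
      linarith [h2]
    have hq3 : Λ 3 2 = Λ 0 2 := by
      have h : (Λ 0 0 + Λ 0 3) * (Λ 3 2 - Λ 0 2) = 0 := by linear_combination hq03 + Λ 0 2*hu3
      have h2 := (mul_eq_zero.mp h).resolve_left hu0ne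
      linarith [h2]
    have hp1sq : Λ 1 1 * Λ 1 1 = 1 := by
      linear_combination -C11 - Λ 2 1*hp2 - (Λ 3 1 + Λ 0 1)*hp3
    have hu0pos : 0 < Λ 0 0 + Λ 0 3 := by
      by_contra hcon
      push_neg at hcon
      have k : Λ 0 0 ≤ -Λ 0 3 := by linarith
      have k2 : Λ 0 0 * Λ 0 0 ≤ Λ 0 3 * Λ 0 3 := by
        have := mul_self_le_mul_self hpos.le k
        simpa [neg_mul_neg] using this
      linarith [mul_self_nonneg (Λ 0 1), mul_self_nonneg (Λ 0 2), R00, k2]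
    have hp1u0 : Λ 1 1 = Λ 0 0 + Λ 0 3 := by
      linear_combination (-(Λ 1 1))*hA + (Λ 0 0 + Λ 0 3)*hp1sq
    have hp1 : Λ 1 1 = 1 := by
      have h : (Λ 1 1 - 1) * (Λ 1 1 + 1) = 0 := by linear_combination hp1sq
      have h2 : (0:ℝ) < Λ 1 1 + 1 := by rw [hp1u0]; linarith
      have h3 := (mul_eq_zero.mp h).resolve_right (ne_of_gt h2)
      linarith [h3]
    have hu0eq : Λ 0 0 + Λ 0 3 = 1 := by linear_combination hA - (Λ 0 0 + Λ 0 3)*hp1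
    have hu3eq : Λ 3 0 + Λ 3 3 = 1 := by rw [hu3]; exact hu0eq
    have hq2 : Λ 2 2 = 1 := by linear_combination hq2A - Λ 2 2*hu0eq
    -- the difference column
    have hw1 : Λ 1 0 - Λ 1 3 = Λ 0 1 * ((Λ 0 0 - Λ 0 3) - (Λ 3 0 - Λ 3 3)) := by
      linear_combination -C01 + C13 - (Λ 1 0 - Λ 1 3)*hp1 - (Λ 2 0 - Λ 2 3)*hp2 - (Λ 3 0 - Λ 3 3)*hp3
    have hw2 : Λ 2 0 - Λ 2 3 = Λ 0 2 * ((Λ 0 0 - Λ 0 3) - (Λ 3 0 - Λ 3 3)) := by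
      linear_combination -C02 + C23 - (Λ 1 0 - Λ 1 3)*hq1 - (Λ 2 0 - Λ 2 3)*hq2 - (Λ 3 0 - Λ 3 3)*hq3
    have ht : (Λ 0 0 - Λ 0 3) - (Λ 3 0 - Λ 3 3) = 2 := by
      linear_combination C00 - C33 - (Λ 0 0 - Λ 0 3)*hu0eq + (Λ 1 0 - Λ 1 3)*hu1 + (Λ 2 0 - Λ 2 3)*hu2 + (Λ 3 0 - Λ 3 3)*hu3eq
    have hw1' : Λ 1 0 - Λ 1 3 = 2*Λ 0 1 := by linear_combination hw1 + Λ 0 1*ht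
    have hw2' : Λ 2 0 - Λ 2 3 = 2*Λ 0 2 := by linear_combination hw2 + Λ 0 2*ht
    have hwnull : (Λ 0 0 - Λ 0 3)^2 - (Λ 1 0 - Λ 1 3)^2 - (Λ 2 0 - Λ 2 3)^2 - (Λ 3 0 - Λ 3 3)^2 = 0 := by
      linear_combination (-4)*C03 + (Λ 0 0 + Λ 0 3 + 1)*hu0eq - (Λ 1 0 + Λ 1 3)*hu1 - (Λ 2 0 + Λ 2 3)*hu2 - (Λ 3 0 + Λ 3 3 + 1)*hu3eq
    have hw3 : Λ 3 0 - Λ 3 3 = Λ 0 1^2 + Λ 0 2^2 - 1 := by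
      linear_combination (hwnull + ((Λ 1 0 - Λ 1 3) + 2*Λ 0 1)*hw1' + ((Λ 2 0 - Λ 2 3) + 2*Λ 0 2)*hw2' - ((Λ 0 0 - Λ 0 3) + (Λ 3 0 - Λ 3 3) + 2)*ht)/4
    have hw0 : Λ 0 0 - Λ 0 3 = Λ 0 1^2 + Λ 0 2^2 + 1 := by linear_combination hw3 + ht
    -- entries
    have e00 : Λ 0 0 = 1 + (Λ 0 1^2 + Λ 0 2^2)/2 := by linear_combination (hu0eq + hw0)/2
    have e03 : Λ 0 3 = -((Λ 0 1^2 + Λ 0 2^2)/2) := by linear_combination (hu0eq - hw0)/2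
    have e10 : Λ 1 0 = Λ 0 1 := by linear_combination (hu1 + hw1')/2
    have e13 : Λ 1 3 = -(Λ 0 1) := by linear_combination (hu1 - hw1')/2
    have e20 : Λ 2 0 = Λ 0 2 := by linear_combination (hu2 + hw2')/2
    have e23 : Λ 2 3 = -(Λ 0 2) := by linear_combination (hu2 - hw2')/2
    have e30 : Λ 3 0 = (Λ 0 1^2 + Λ 0 2^2)/2 := by linear_combination (hu3eq + hw3)/2
    have e33 : Λ 3 3 = 1 - (Λ 0 1^2 + Λ 0 2^2)/2 := by linear_combination (hu3eq - hw3)/2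
    refine ⟨⟨Λ 0 1, Λ 0 2⟩, ?_⟩
    ext i j
    fin_cases i <;> fin_cases j <;>
      simp [Bmat, Complex.normSq_mk, e00, e03, e10, e13, e20, e23, e30, e33,
        hp1, hq1, hp2, hq2, hp3, hq3] <;>
      ring_nf

  · rintro ⟨f, rfl⟩
    ext i j
    fin_cases i <;> fin_cases j
    all_goals simp [toC, Bmat, lmWedge, lV, mV, Matrix.mul_apply, Fin.sum_univ_four,
        Matrix.vecMulVec_apply, Complex.ext_iff, Complex.normSq_apply]
    all_goals try constructor <;> try ring
    all_goals try ring
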